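/- Let B be a connected mutation-finite real quiver such that the highest denominator of the mutation class of B equals 5. Then no matrix in the mutation class of B contains a denominator-4 arrow; that is, no matrix C mutation-equivalent to B has an entry with |c_ij| = √2. -/

import Mathlib

/-! All weights of the mutation class are `0, ±1, ±2, ±√2` or `±φ^{±1}` with `φ = 2cos(π/5)`; they
lie in `ℚ(√2, √5)`, have no `√10`-component, and none mixes `√2` with `1` or `√5`. Since
`ℚ(√2)` and `ℚ(√5)` are each preserved by mutation, a `√2`-arrow somewhere in the class forces
one in `B`, and the golden arrow of denominator `5` forces a golden arrow in `B`; by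
connectedness they are joined by a path. No quiver of the class contains such a configuration:
when the two arrows are adjacent, a mutation at their common vertex (after possibly reversing
the golden arrow) produces a weight with a `√10`-component or a mixed one; otherwise a mutation
at the first vertex of the path (after possibly reversing the first arrow of the path) turns
the `√2`-arrow into a `√2`-arrow one step further along, and induction on the length of the
path applies. -/

open Real

noncomputable section

namespace RealQuiver

variable {n : ℕ}

/-- Mutation of a real quiver (a skew-symmetric real matrix) at vertex `k`. -/
def mutate (B : Matrix (Fin n) (Fin n) ℝ) (k : Fin n) : Matrix (Fin n) (Fin n) ℝ :=
  fun i j => if i = k ∨ j = k then -B i j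
    else B i j + (|B i k| * B k j + B i k * |B k j|) / 2

/-- One mutation step. -/
def MutStep (B C : Matrix (Fin n) (Fin n) ℝ) : Prop := ∃ k, C = mutate B k

/-- `C` is obtained from `B` by a finite sequence of mutations. -/
def Reachable (B C : Matrix (Fin n) (Fin n) ℝ) : Prop :=
  Relation.ReflTransGen MutStep B C

/-- `B` is mutation-finite. -/
def MutationFinite (B : Matrix (Fin n) (Fin n) ℝ) : Prop :=
  {C | Reachable B C}.Finite

/-- Simultaneous permutation of the indices of `B`. -/
def permute (B : Matrix (Fin n) (Fin n) ℝ) (σ : Equiv.Perm (Fin n)) :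
    Matrix (Fin n) (Fin n) ℝ := fun i j => B (σ i) (σ j)

/-- Mutation-equivalence: a finite sequence of mutations followed by a
simultaneous permutation of the indices. -/
def MutEquiv (B C : Matrix (Fin n) (Fin n) ℝ) : Prop :=
  ∃ C' σ, Reachable B C' ∧ C = permute C' σ

/-- The underlying (undirected) graph of a quiver. -/
def toGraph (B : Matrix (Fin n) (Fin n) ℝ) : SimpleGraph (Fin n) where
  Adj i j := i ≠ j ∧ (B i j ≠ 0 ∨ B j i ≠ 0)
  symm := ⟨fun i j h => ⟨h.1.symm, h.2.symm⟩⟩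
  loopless := ⟨fun i h => h.1 rfl⟩

/-- Connectedness of a quiver. -/
def Connected (B : Matrix (Fin n) (Fin n) ℝ) : Prop := (toGraph B).Connected

def IsSkewSymmetric (B : Matrix (Fin n) (Fin n) ℝ) : Prop :=
  ∀ i j, B j i = -B i j

/-- A quiver is cyclic if its directed graph (an arrow `i → j` whenever
`B i j > 0`) contains a directed cycle. -/
def Cyclic (B : Matrix (Fin n) (Fin n) ℝ) : Prop :=
  ∃ i, Relation.TransGen (fun a b => 0 < B a b) i i

def Acyclic (B : Matrix (Fin n) (Fin n) ℝ) : Prop := ¬ Cyclic B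

/-- The rank-3 cyclic quiver `(a,b,c)`: `b₁₂ = a`, `b₂₃ = b`, `b₃₁ = c`. -/
def cyclicQ (a b c : ℝ) : Matrix (Fin 3) (Fin 3) ℝ :=
  !![0, a, -c; -a, 0, b; c, -b, 0]

/-- The rank-3 acyclic quiver `(a,b,-c)`: `b₁₂ = a`, `b₂₃ = b`, `b₁₃ = c`. -/
def acyclicQ (a b c : ℝ) : Matrix (Fin 3) (Fin 3) ℝ :=
  !![0, a, c; -a, 0, b; -c, -b, 0]

/-- `d` is the highest denominator of the mutation class of `B`. -/
def HighestDenom (B : Matrix (Fin n) (Fin n) ℝ) (d : ℕ) : Prop :=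
  (∀ C, MutEquiv B C → ∀ i j, i ≠ j →
    C i j = 0 ∨ ∃ p q : ℕ, 2 * p < q ∧ q ≤ d ∧ |C i j| = 2 * Real.cos (π * p / q)) ∧
  (∃ C, MutEquiv B C ∧ ∃ i j, ∃ p : ℕ, 0 < p ∧ 2 * p < d ∧ Nat.gcd p d = 1 ∧
    |C i j| = 2 * Real.cos (π * p / d))

/-- The rank-4 quiver `L n` (even denominator `d = 2n`):
`b₁₂ = b₂₃ = 2cos(π/2n)`, `b₃₁ = 2`, `b₁₄ = b₄₃ = 2cos(π(n-1)/2n)`, `b₂₄ = 0`. -/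
def Lq (n : ℕ) : Matrix (Fin 4) (Fin 4) ℝ :=
  !![0, 2 * Real.cos (π / (2 * n)), -2, 2 * Real.cos (π * ((n : ℝ) - 1) / (2 * n));
     -(2 * Real.cos (π / (2 * n))), 0, 2 * Real.cos (π / (2 * n)), 0;
     2, -(2 * Real.cos (π / (2 * n))), 0, -(2 * Real.cos (π * ((n : ℝ) - 1) / (2 * n)));
     -(2 * Real.cos (π * ((n : ℝ) - 1) / (2 * n))), 0, 2 * Real.cos (π * ((n : ℝ) - 1) / (2 * n)), 0]

/-- The rank-4 quiver `M n` (even denominator `d = 2n`):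
`b₁₂ = b₂₃ = 2cos(π/2n)`, `b₃₁ = 2`, `b₂₄ = 2cos(π(n-1)/2n)`, `b₁₄ = b₃₄ = 0`. -/
def Mq (n : ℕ) : Matrix (Fin 4) (Fin 4) ℝ :=
  !![0, 2 * Real.cos (π / (2 * n)), -2, 0;
     -(2 * Real.cos (π / (2 * n))), 0, 2 * Real.cos (π / (2 * n)), 2 * Real.cos (π * ((n : ℝ) - 1) / (2 * n));
     2, -(2 * Real.cos (π / (2 * n))), 0, 0;
     0, -(2 * Real.cos (π * ((n : ℝ) - 1) / (2 * n))), 0, 0]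

/-- The rank-4 quiver `O n` (odd denominator `d = 2n+1`):
`b₁₂ = b₂₃ = 2cos(π/d)`, `b₃₁ = 2`, `b₁₄ = b₂₄ = b₄₃ = 2cos(πn/d)`. -/
def Oq (n : ℕ) : Matrix (Fin 4) (Fin 4) ℝ :=
  !![0, 2 * Real.cos (π / (2 * n + 1)), -2, 2 * Real.cos (π * n / (2 * n + 1));
     -(2 * Real.cos (π / (2 * n + 1))), 0, 2 * Real.cos (π / (2 * n + 1)), 2 * Real.cos (π * n / (2 * n + 1));
     2, -(2 * Real.cos (π / (2 * n + 1))), 0, -(2 * Real.cos (π * n / (2 * n + 1)));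
     -(2 * Real.cos (π * n / (2 * n + 1))), -(2 * Real.cos (π * n / (2 * n + 1))), 2 * Real.cos (π * n / (2 * n + 1)), 0]

def biquad (a b c d : ℚ) : ℝ := a + b * √2 + c * √5 + d * √10

lemma sqrt_two_mul_self : √2 * √2 = 2 := mul_self_sqrt (by norm_num)
lemma sqrt_five_mul_self : √5 * √5 = 5 := mul_self_sqrt (by norm_num)
lemma sqrt_ten_eq : √10 = √2 * √5 := by
  rw [← sqrt_mul (by norm_num)]; norm_num

lemma irrational_sqrt_ten : Irrational √10 := by
  have h : ¬ IsSquare 10 := by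
    rintro ⟨r, hr⟩
    have : r ≤ 3 := by nlinarith
    interval_cases r <;> omega
  exact_mod_cast irrational_sqrt_natCast_iff.mpr h

lemma eq_zero_of_add_mul_sqrt_two_eq_zero {x y : ℚ} (h : (x : ℝ) + y * √2 = 0) :
    x = 0 ∧ y = 0 := by
  obtain rfl : y = 0 := by
    by_contra hy
    refine irrational_sqrt_two.ne_rat (-x / y) ?_
    push_cast
    field_simp
    linarith
  exact ⟨by exact_mod_cast (by simpa using h : (x : ℝ) = 0), rfl⟩

lemma eq_zero_of_sq_eq_two_mul_sq {c d : ℚ} (h : c ^ 2 = 2 * d ^ 2) : c = 0 ∧ d = 0 := by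
  have h' : ((c : ℝ) + d * √2) * ((c : ℝ) + (-d : ℚ) * √2) = 0 := by
    have hR : (c : ℝ) ^ 2 = 2 * (d : ℝ) ^ 2 := by exact_mod_cast h
    push_cast
    linear_combination hR - (d : ℝ) ^ 2 * sqrt_two_mul_self
  rcases mul_eq_zero.mp h' with h' | h'
  · exact eq_zero_of_add_mul_sqrt_two_eq_zero h'
  · obtain ⟨hc, hd⟩ := eq_zero_of_add_mul_sqrt_two_eq_zero h'
    exact ⟨hc, neg_eq_zero.mp hd⟩

lemma sqrt_five_ne_add_mul_sqrt_two (x y : ℚ) : √5 ≠ x + y * √2 := by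
  intro h
  have hsq : ((x ^ 2 + 2 * y ^ 2 - 5 : ℚ) : ℝ) + (2 * x * y : ℚ) * √2 = 0 := by
    push_cast
    linear_combination -(x + y * √2 + √5) * h - y ^ 2 * sqrt_two_mul_self + sqrt_five_mul_self
  obtain ⟨-, hxy⟩ := eq_zero_of_add_mul_sqrt_two_eq_zero hsq
  rcases mul_eq_zero.mp hxy with hx | rfl
  · obtain rfl : x = 0 := by linarith [mul_eq_zero.mp hx]
    refine irrational_sqrt_ten.ne_rat (2 * y) ?_
    rw [sqrt_ten_eq, h]
    push_cast
    linear_combination y * sqrt_two_mul_self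
  · have h5 : √5 = (x : ℝ) := by simpa using h
    exact (Nat.Prime.irrational_sqrt (p := 5) (by norm_num)).ne_rat x (by exact_mod_cast h5)

lemma biquad_eq_zero_iff {a b c d : ℚ} : biquad a b c d = 0 ↔ a = 0 ∧ b = 0 ∧ c = 0 ∧ d = 0 := by
  refine ⟨fun h => ?_, by rintro ⟨rfl, rfl, rfl, rfl⟩; simp [biquad]⟩
  -- multiplying by the conjugate `c - d√2` of the coefficient of `√5` isolates `√5`
  have hconj : ((a * c - 2 * b * d : ℚ) : ℝ) + (b * c - a * d : ℚ) * √2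
      + (c ^ 2 - 2 * d ^ 2 : ℚ) * √5 = 0 := by
    unfold biquad at h
    rw [sqrt_ten_eq] at h
    push_cast
    linear_combination (c - d * √2) * h + (b * d + d ^ 2 * √5) * sqrt_two_mul_self
  obtain ⟨rfl, rfl⟩ : c = 0 ∧ d = 0 := by
    refine eq_zero_of_sq_eq_two_mul_sq (sub_eq_zero.mp (by_contra fun hN => ?_))
    refine sqrt_five_ne_add_mul_sqrt_two (-(a * c - 2 * b * d) / (c ^ 2 - 2 * d ^ 2))
      (-(b * c - a * d) / (c ^ 2 - 2 * d ^ 2)) ?_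
    have hN' : ((c ^ 2 - 2 * d ^ 2 : ℚ) : ℝ) ≠ 0 := by exact_mod_cast hN
    push_cast at hN' hconj ⊢
    field_simp
    linear_combination hconj
  obtain ⟨rfl, rfl⟩ := eq_zero_of_add_mul_sqrt_two_eq_zero (by simpa [biquad] using h)
  simp

lemma biquad_inj {a b c d a' b' c' d' : ℚ} :
    biquad a b c d = biquad a' b' c' d' ↔ a = a' ∧ b = b' ∧ c = c' ∧ d = d' := by
  have hsub : biquad a b c d - biquad a' b' c' d' = biquad (a - a') (b - b') (c - c') (d - d') := by
    simp only [biquad]; push_cast; ring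
  rw [← sub_eq_zero, hsub, biquad_eq_zero_iff]
  simp only [sub_eq_zero]

lemma biquad_add (a b c d a' b' c' d' : ℚ) :
    biquad a b c d + biquad a' b' c' d' = biquad (a + a') (b + b') (c + c') (d + d') := by
  simp only [biquad]; push_cast; ring

lemma biquad_neg (a b c d : ℚ) : -biquad a b c d = biquad (-a) (-b) (-c) (-d) := by
  simp only [biquad]; push_cast; ring

lemma biquad_mul (a b c d a' b' c' d' : ℚ) :
    biquad a b c d * biquad a' b' c' d' =
      biquad (a * a' + 2 * b * b' + 5 * c * c' + 10 * d * d')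
        (a * b' + b * a' + 5 * (c * d' + d * c'))
        (a * c' + c * a' + 2 * (b * d' + d * b'))
        (a * d' + d * a' + b * c' + c * b') := by
  simp only [biquad, sqrt_ten_eq]
  push_cast
  linear_combination (b * b' + (b * d' + d * b') * √5 + d * d' * √5 ^ 2) * sqrt_two_mul_self
    + (c * c' + (c * d' + d * c') * √2 + 2 * d * d') * sqrt_five_mul_self

lemma biquad_ratCast (r : ℚ) : biquad r 0 0 0 = r := by simp [biquad]

lemma sqrt_two_eq_biquad : √2 = biquad 0 1 0 0 := by simp [biquad]

def IsRatWeight (z : ℝ) : Prop := ∃ r : ℚ, z = r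

def IsSqrtTwoWeight (z : ℝ) : Prop := |z| = √2

/-- `|z|` is the golden ratio `φ = 2cos(π/5)` or `φ⁻¹ = 2cos(2π/5)`. -/
def IsGoldenWeight (z : ℝ) : Prop := ∃ a c : ℚ, |a| = 1 / 2 ∧ |c| = 1 / 2 ∧ z = biquad a 0 c 0

/-- Up to sign, the weights `2cos(πp/q)` with `q ≤ 5` are `2`, `1`, `√2`, `φ` and `φ⁻¹`; only
their kind matters below, so all rationals are admitted. -/
def IsWeight (z : ℝ) : Prop := IsRatWeight z ∨ IsSqrtTwoWeight z ∨ IsGoldenWeight z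

lemma IsRatWeight.neg {z : ℝ} (h : IsRatWeight z) : IsRatWeight (-z) := by
  obtain ⟨r, rfl⟩ := h
  exact ⟨-r, by push_cast; rfl⟩

lemma IsSqrtTwoWeight.neg {z : ℝ} (h : IsSqrtTwoWeight z) : IsSqrtTwoWeight (-z) := by
  rwa [IsSqrtTwoWeight, abs_neg]

lemma IsGoldenWeight.neg {z : ℝ} (h : IsGoldenWeight z) : IsGoldenWeight (-z) := by
  obtain ⟨a, c, ha, hc, rfl⟩ := h
  exact ⟨-a, -c, by rwa [abs_neg], by rwa [abs_neg], by rw [biquad_neg, neg_zero]⟩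

lemma IsWeight.neg {z : ℝ} (h : IsWeight z) : IsWeight (-z) :=
  h.imp IsRatWeight.neg (Or.imp IsSqrtTwoWeight.neg IsGoldenWeight.neg)

lemma IsWeight.of_abs {z : ℝ} (h : IsWeight |z|) : IsWeight z := by
  rcases abs_choice z with hz | hz <;> rw [hz] at h
  · exact h
  · simpa using h.neg

lemma IsGoldenWeight.of_abs {z : ℝ} (h : IsGoldenWeight |z|) : IsGoldenWeight z := by
  rcases abs_choice z with hz | hz <;> rw [hz] at h
  · exact h
  · simpa using h.neg

lemma IsGoldenWeight.abs {z : ℝ} (h : IsGoldenWeight z) : IsGoldenWeight |z| := by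
  rcases abs_choice z with hz | hz <;> rw [hz]
  · exact h
  · exact h.neg

lemma IsSqrtTwoWeight.eq_biquad {z : ℝ} (h : IsSqrtTwoWeight z) :
    ∃ e : ℚ, |e| = 1 ∧ z = biquad 0 e 0 0 := by
  rcases abs_choice z with hz | hz
  · exact ⟨1, abs_one, by rw [← hz, h, sqrt_two_eq_biquad]⟩
  · exact ⟨-1, by norm_num, by rw [← neg_neg z, ← hz, h, sqrt_two_eq_biquad, biquad_neg]; simp⟩

lemma IsWeight.exists_biquad {z : ℝ} (h : IsWeight z) : ∃ a b c : ℚ, z = biquad a b c 0 := by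
  rcases h with ⟨r, rfl⟩ | h | ⟨a, c, -, -, rfl⟩
  · exact ⟨r, 0, 0, (biquad_ratCast r).symm⟩
  · obtain ⟨e, -, rfl⟩ := h.eq_biquad
    exact ⟨0, e, 0, rfl⟩
  · exact ⟨a, 0, c, rfl⟩

lemma IsSqrtTwoWeight.ne_zero {z : ℝ} (h : IsSqrtTwoWeight z) : z ≠ 0 := by
  rintro rfl
  exact (sqrt_pos.mpr two_pos).ne' (h.symm.trans abs_zero)

lemma IsGoldenWeight.ne_zero {z : ℝ} (h : IsGoldenWeight z) : z ≠ 0 := by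
  obtain ⟨a, c, -, hc, rfl⟩ := h
  rw [Ne, biquad_eq_zero_iff]
  rintro ⟨-, -, rfl, -⟩
  norm_num at hc

lemma IsSqrtTwoWeight.not_isRatWeight {z : ℝ} (h : IsSqrtTwoWeight z) : ¬ IsRatWeight z := by
  rintro ⟨r, hr⟩
  obtain ⟨e, he, rfl⟩ := h.eq_biquad
  rw [← biquad_ratCast, biquad_inj] at hr
  obtain ⟨-, rfl, -⟩ := hr
  norm_num at he

lemma IsSqrtTwoWeight.not_isGoldenWeight {z : ℝ} (h : IsSqrtTwoWeight z) : ¬ IsGoldenWeight z := by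
  rintro ⟨a, c, -, hc, hz⟩
  obtain ⟨e, -, rfl⟩ := h.eq_biquad
  obtain ⟨-, -, rfl, -⟩ := biquad_inj.mp hz
  norm_num at hc

lemma IsWeight.sqrtTen_coeff_eq_zero {a b c d : ℚ} (h : IsWeight (biquad a b c d)) : d = 0 := by
  obtain ⟨a', b', c', h'⟩ := h.exists_biquad
  exact (biquad_inj.mp h').2.2.2

lemma IsWeight.isSqrtTwoWeight_of_sqrtTwo_coeff_ne_zero {a b c d : ℚ}
    (h : IsWeight (biquad a b c d)) (hb : b ≠ 0) : IsSqrtTwoWeight (biquad a b c d) ∧ a = 0 ∧ c = 0 := by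
  rcases h with ⟨r, hr⟩ | h | ⟨a', c', -, -, hz⟩
  · rw [← biquad_ratCast, biquad_inj] at hr
    exact absurd hr.2.1 hb
  · obtain ⟨e, -, hz⟩ := h.eq_biquad
    obtain ⟨rfl, -, rfl, -⟩ := biquad_inj.mp hz
    exact ⟨h, rfl, rfl⟩
  · exact absurd (biquad_inj.mp hz).2.1 hb

lemma IsWeight.isGoldenWeight_of_sqrtFive_coeff_ne_zero {a b c d : ℚ}
    (h : IsWeight (biquad a b c d)) (hc : c ≠ 0) : IsGoldenWeight (biquad a b c d) := by
  rcases h with ⟨r, hr⟩ | h | h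
  · rw [← biquad_ratCast, biquad_inj] at hr
    exact absurd hr.2.2.1 hc
  · obtain ⟨e, -, hz⟩ := h.eq_biquad
    exact absurd (biquad_inj.mp hz).2.2.1 hc
  · exact h

lemma abs_ratCast_eq_biquad (r : ℚ) : |(r : ℝ)| = biquad |r| 0 0 0 := by
  rw [biquad_ratCast, Rat.cast_abs]

def mutTerm (x y : ℝ) : ℝ := (|x| * y + x * |y|) / 2

lemma mutTerm_of_pos {x y : ℝ} (h : 0 < x * y) : mutTerm x y = |x| * y := by
  rcases mul_pos_iff.mp h with ⟨hx, hy⟩ | ⟨hx, hy⟩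
  · rw [mutTerm, abs_of_pos hx, abs_of_pos hy]; ring
  · rw [mutTerm, abs_of_neg hx, abs_of_neg hy]; ring

lemma mutTerm_of_nonpos {x y : ℝ} (h : x * y ≤ 0) : mutTerm x y = 0 := by
  rcases mul_nonpos_iff.mp h with ⟨hx, hy⟩ | ⟨hx, hy⟩
  · rw [mutTerm, abs_of_nonneg hx, abs_of_nonpos hy]; ring
  · rw [mutTerm, abs_of_nonpos hx, abs_of_nonneg hy]; ring

lemma ne_zero_of_mutTerm_ne_zero {x y : ℝ} (h : mutTerm x y ≠ 0) : x ≠ 0 ∧ y ≠ 0 := by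
  constructor <;> rintro rfl <;> exact h (mutTerm_of_nonpos (by simp))

lemma IsRatWeight.mutTerm {x y : ℝ} (hx : IsRatWeight x) (hy : IsRatWeight y) :
    IsRatWeight (mutTerm x y) := by
  obtain ⟨r, rfl⟩ := hx
  obtain ⟨s, rfl⟩ := hy
  exact ⟨(|r| * s + r * |s|) / 2, by rw [RealQuiver.mutTerm]; push_cast; rfl⟩

lemma mutate_of_ne {B : Matrix (Fin n) (Fin n) ℝ} {i j k : Fin n} (hi : i ≠ k) (hj : j ≠ k) :
    mutate B k i j = B i j + mutTerm (B i k) (B k j) := by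
  simp [mutate, mutTerm, hi, hj]

lemma mutate_of_incident {B : Matrix (Fin n) (Fin n) ℝ} {i j k : Fin n} (h : i = k ∨ j = k) :
    mutate B k i j = -B i j :=
  if_pos h

lemma IsSkewSymmetric.apply_self {B : Matrix (Fin n) (Fin n) ℝ} (h : IsSkewSymmetric B)
    (i : Fin n) : B i i = 0 := by
  linarith [h i i]

def quadraticSubalgebra (d : ℕ) : Subalgebra ℚ ℝ where
  carrier := {x | ∃ a b : ℚ, x = a + b * √d}
  mul_mem' := by
    rintro _ _ ⟨a, b, rfl⟩ ⟨a', b', rfl⟩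
    refine ⟨a * a' + d * b * b', a * b' + b * a', ?_⟩
    push_cast
    linear_combination (b * b' : ℝ) * mul_self_sqrt (Nat.cast_nonneg d)
  add_mem' := by
    rintro _ _ ⟨a, b, rfl⟩ ⟨a', b', rfl⟩
    exact ⟨a + a', b + b', by push_cast; ring⟩
  algebraMap_mem' r := ⟨r, 0, by simp⟩

lemma mutate_mem_subalgebra (K : Subalgebra ℚ ℝ) {B : Matrix (Fin n) (Fin n) ℝ}
    (hB : ∀ i j, B i j ∈ K) (k i j : Fin n) : mutate B k i j ∈ K := by
  have habs : ∀ x ∈ K, |x| ∈ K := fun x hx => by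
    rcases abs_choice x with h | h <;> rw [h]
    · exact hx
    · exact neg_mem hx
  unfold mutate
  split_ifs
  · exact neg_mem (hB i j)
  · rw [div_eq_mul_inv]
    refine add_mem (hB i j) (mul_mem (add_mem (mul_mem (habs _ (hB i k)) (hB k j))
      (mul_mem (hB i k) (habs _ (hB k j)))) ?_)
    simpa using K.algebraMap_mem (2⁻¹ : ℚ)

lemma MutEquiv.refl (B : Matrix (Fin n) (Fin n) ℝ) : MutEquiv B B :=
  ⟨B, 1, Relation.ReflTransGen.refl, rfl⟩

lemma mutate_permute (C : Matrix (Fin n) (Fin n) ℝ) (σ : Equiv.Perm (Fin n)) (k : Fin n) :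
    mutate (permute C σ) k = permute (mutate C (σ k)) σ := by
  funext i j
  simp [mutate, permute]

lemma MutEquiv.trans_mutate {B C : Matrix (Fin n) (Fin n) ℝ} (h : MutEquiv B C) (k : Fin n) :
    MutEquiv B (mutate C k) := by
  obtain ⟨C', σ, hr, rfl⟩ := h
  exact ⟨mutate C' (σ k), σ, hr.tail ⟨σ k, rfl⟩, mutate_permute C' σ k⟩

lemma MutEquiv.of_invariant (P : Matrix (Fin n) (Fin n) ℝ → Prop)
    (hmut : ∀ C k, P C → P (mutate C k)) (hperm : ∀ C σ, P C → P (permute C σ))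
    {B C : Matrix (Fin n) (Fin n) ℝ} (h : MutEquiv B C) (hB : P B) : P C := by
  obtain ⟨C', σ, hr, rfl⟩ := h
  refine hperm _ σ ?_
  induction hr with
  | refl => exact hB
  | tail _ hstep ih =>
    obtain ⟨k, rfl⟩ := hstep
    exact hmut _ k ih

lemma IsSkewSymmetric.mutate {B : Matrix (Fin n) (Fin n) ℝ} (h : IsSkewSymmetric B) (k : Fin n) :
    IsSkewSymmetric (mutate B k) := by
  intro i j
  by_cases hij : i = k ∨ j = k
  · rw [mutate_of_incident hij, mutate_of_incident hij.symm, h i j]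
  · rw [mutate_of_ne (fun h' => hij (Or.inr h')) (fun h' => hij (Or.inl h')),
      mutate_of_ne (fun h' => hij (Or.inl h')) (fun h' => hij (Or.inr h')), h i j, h i k, h k j,
      mutTerm, mutTerm, abs_neg, abs_neg]
    ring

lemma MutEquiv.isSkewSymmetric {B C : Matrix (Fin n) (Fin n) ℝ} (h : MutEquiv B C)
    (hB : IsSkewSymmetric B) : IsSkewSymmetric C :=
  h.of_invariant _ (fun _ k hC => hC.mutate k) (fun _ σ hC i j => hC (σ i) (σ j)) hB

lemma MutEquiv.mem_subalgebra {B C : Matrix (Fin n) (Fin n) ℝ} (h : MutEquiv B C)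
    (K : Subalgebra ℚ ℝ) (hB : ∀ i j, B i j ∈ K) : ∀ i j, C i j ∈ K :=
  h.of_invariant (fun C => ∀ i j, C i j ∈ K) (fun _ k hC => mutate_mem_subalgebra K hC k)
    (fun _ σ hC i j => hC (σ i) (σ j)) hB

lemma IsWeight.mem_five_of_not_isSqrtTwoWeight {z : ℝ} (h : IsWeight z)
    (h2 : ¬ IsSqrtTwoWeight z) : z ∈ quadraticSubalgebra 5 := by
  rcases h with ⟨r, rfl⟩ | h | ⟨a, c, -, -, rfl⟩
  · exact ⟨r, 0, by simp⟩
  · exact (h2 h).elim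
  · exact ⟨a, c, by simp [biquad]⟩

lemma IsWeight.mem_two_of_not_isGoldenWeight {z : ℝ} (h : IsWeight z)
    (h5 : ¬ IsGoldenWeight z) : z ∈ quadraticSubalgebra 2 := by
  rcases h with ⟨r, rfl⟩ | h | h
  · exact ⟨r, 0, by simp⟩
  · obtain ⟨e, -, rfl⟩ := h.eq_biquad
    exact ⟨0, e, by simp [biquad]⟩
  · exact (h5 h).elim

lemma IsSqrtTwoWeight.not_mem_five {z : ℝ} (h : IsSqrtTwoWeight z) :
    z ∉ quadraticSubalgebra 5 := by
  rintro ⟨a, c, hz⟩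
  obtain ⟨e, he, rfl⟩ := h.eq_biquad
  rw [show (a : ℝ) + c * √(5 : ℕ) = biquad a 0 c 0 by simp [biquad], biquad_inj] at hz
  obtain ⟨-, rfl, -⟩ := hz
  norm_num at he

lemma IsGoldenWeight.not_mem_two {z : ℝ} (h : IsGoldenWeight z) :
    z ∉ quadraticSubalgebra 2 := by
  rintro ⟨a', b', hz⟩
  obtain ⟨a, c, -, hc, rfl⟩ := h
  rw [show (a' : ℝ) + b' * √(2 : ℕ) = biquad a' b' 0 0 by simp [biquad], biquad_inj] at hz
  obtain ⟨-, -, rfl, -⟩ := hz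
  norm_num at hc

/-- `√2`-weights cannot arise by mutation from a quiver with weights in `ℚ(√5)`. -/
lemma exists_isSqrtTwoWeight_of_mutEquiv {B C : Matrix (Fin n) (Fin n) ℝ}
    (hB : ∀ i j, IsWeight (B i j)) (hC : MutEquiv B C) {i j : Fin n}
    (h : IsSqrtTwoWeight (C i j)) : ∃ u v, IsSqrtTwoWeight (B u v) := by
  by_contra hno
  simp only [not_exists] at hno
  exact h.not_mem_five (hC.mem_subalgebra _
    (fun u v => (hB u v).mem_five_of_not_isSqrtTwoWeight (hno u v)) i j)

lemma exists_isGoldenWeight_of_mutEquiv {B C : Matrix (Fin n) (Fin n) ℝ}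
    (hB : ∀ i j, IsWeight (B i j)) (hC : MutEquiv B C) {i j : Fin n}
    (h : IsGoldenWeight (C i j)) : ∃ u v, IsGoldenWeight (B u v) := by
  by_contra hno
  simp only [not_exists] at hno
  exact h.not_mem_two (hC.mem_subalgebra _
    (fun u v => (hB u v).mem_two_of_not_isGoldenWeight (hno u v)) i j)

structure MutationClosedWeights (S : Set (Matrix (Fin n) (Fin n) ℝ)) : Prop where
  skew : ∀ C ∈ S, IsSkewSymmetric C
  isWeight : ∀ C ∈ S, ∀ i j, IsWeight (C i j)
  mutate_mem : ∀ C ∈ S, ∀ k, mutate C k ∈ S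

section MutationClosedWeights

variable {S : Set (Matrix (Fin n) (Fin n) ℝ)} {C : Matrix (Fin n) (Fin n) ℝ}

/-- Mutating at `k` adds `√2 · (±1/2 ± √5/2)` to `C i j`, creating a `√10`-component. -/
lemma not_sqrtTwo_golden_of_pos (hS : MutationClosedWeights S) (hC : C ∈ S) {i j k : Fin n}
    (hik : IsSqrtTwoWeight (C i k)) (hkj : IsGoldenWeight (C k j)) (hpos : 0 < C i k * C k j) :
    False := by
  have hsk := hS.skew C hC
  have hi : i ≠ k := by rintro rfl; exact hik.ne_zero (hsk.apply_self i)
  have hj : j ≠ k := by rintro rfl; exact hkj.ne_zero (hsk.apply_self j)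
  obtain ⟨a, b, c, hij⟩ := (hS.isWeight C hC i j).exists_biquad
  obtain ⟨a', c', -, hc', hkj'⟩ := hkj
  have h := hS.isWeight _ (hS.mutate_mem C hC k) i j
  rw [mutate_of_ne hi hj, mutTerm_of_pos hpos, hik, hij, hkj', sqrt_two_eq_biquad, biquad_mul,
    biquad_add] at h
  have hc'0 := h.sqrtTen_coeff_eq_zero
  norm_num at hc'0
  norm_num [hc'0] at hc'

lemma golden_mul_golden_rat_coeff_ne_zero {a c a' c' : ℚ} (ha : |a| = 1 / 2) (hc : |c| = 1 / 2)
    (ha' : |a'| = 1 / 2) (hc' : |c'| = 1 / 2) : a * a' + 5 * c * c' ≠ 0 := by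
  intro h
  have := congrArg abs (eq_neg_of_add_eq_zero_left h)
  norm_num [abs_mul, ha, hc, ha', hc'] at this

/-- Whatever the kind of `s`, the sum mixes `√2` with `√5`, `√10` or a nonzero rational. -/
lemma not_isWeight_sqrtTwo_add_abs_mul_golden {x y s : ℝ} (hx : IsSqrtTwoWeight x)
    (hy : IsGoldenWeight y) (hs : IsWeight s) (hs0 : s ≠ 0) : ¬ IsWeight (x + |s| * y) := by
  intro h
  obtain ⟨e, he, rfl⟩ := hx.eq_biquad
  obtain ⟨a, c, ha, hc, rfl⟩ := hy
  have he0 : e ≠ 0 := by rintro rfl; norm_num at he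
  have hc0 : c ≠ 0 := by rintro rfl; norm_num at hc
  rcases hs with ⟨r, rfl⟩ | hs | hs
  · rw [abs_ratCast_eq_biquad, biquad_mul, biquad_add] at h
    norm_num at h
    have hr0 : r ≠ 0 := by rintro rfl; exact hs0 Rat.cast_zero
    exact mul_ne_zero (abs_ne_zero.mpr hr0) hc0
      (h.isSqrtTwoWeight_of_sqrtTwo_coeff_ne_zero he0).2.2
  · rw [hs, sqrt_two_eq_biquad, biquad_mul, biquad_add] at h
    norm_num at h
    exact hc0 h.sqrtTen_coeff_eq_zero
  · obtain ⟨a₂, c₂, ha₂, hc₂, hs'⟩ := hs.abs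
    rw [hs', biquad_mul, biquad_add] at h
    norm_num at h
    exact golden_mul_golden_rat_coeff_ne_zero ha₂ hc₂ ha hc
      (h.isSqrtTwoWeight_of_sqrtTwo_coeff_ne_zero he0).2.1

lemma not_sqrtTwo_golden_adjacent (hS : MutationClosedWeights S) (hC : C ∈ S) {i j k : Fin n}
    (hik : IsSqrtTwoWeight (C i k)) (hkj : IsGoldenWeight (C k j)) : False := by
  have hsk := hS.skew C hC
  rcases lt_trichotomy (C i k * C k j) 0 with hneg | hzero | hpos
  · -- mutating at `j` reverses `k → j`; unless this also changes `C i k`, we are in the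
    -- oriented case
    have hij : i ≠ j := by
      rintro rfl
      exact hik.not_isGoldenWeight (by rw [hsk k i]; exact hkj.neg)
    have hkj_ne : k ≠ j := by rintro rfl; exact hkj.ne_zero (hsk.apply_self k)
    have hD := hS.mutate_mem C hC j
    have hDkj : mutate C j k j = -C k j := mutate_of_incident (Or.inr rfl)
    rcases le_or_gt (C i j * C j k) 0 with hle | hlt
    · refine not_sqrtTwo_golden_of_pos hS hD (i := i) (k := k) ?_ (hDkj ▸ hkj.neg) ?_ <;>
        rw [mutate_of_ne hij hkj_ne, mutTerm_of_nonpos hle, add_zero]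
      · exact hik
      · rw [hDkj]; linarith
    · have hjk : IsGoldenWeight (C j k) := by rw [hsk k j]; exact hkj.neg
      refine not_isWeight_sqrtTwo_add_abs_mul_golden hik hjk (hS.isWeight C hC i j)
        (fun h0 => by simp [h0] at hlt) ?_
      rw [← mutTerm_of_pos hlt, ← mutate_of_ne hij hkj_ne]
      exact hS.isWeight _ hD i k
  · exact mul_ne_zero hik.ne_zero hkj.ne_zero hzero
  · exact not_sqrtTwo_golden_of_pos hS hC hik hkj hpos

structure IsMixedChain (C : Matrix (Fin n) (Fin n) ℝ) (L : ℕ) (u w : Fin n) (p : ℕ → Fin n) :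
    Prop where
  start : IsSqrtTwoWeight (C u (p 0))
  path : ∀ m < L, C (p m) (p (m + 1)) ≠ 0
  finish : IsGoldenWeight (C (p L) w)

namespace IsMixedChain

variable {L : ℕ} {u w : Fin n} {p : ℕ → Fin n}

lemma shortcut (h : IsMixedChain C L u w p) {j k : ℕ} (hjk : j < k) (hkL : k ≤ L)
    (hne : C (p j) (p k) ≠ 0) :
    IsMixedChain C (L - (k - j - 1)) u w (fun m => if m ≤ j then p m else p (m + (k - j - 1))) where
  start := by simpa using h.start
  path m hm := by
    rcases lt_trichotomy m j with hmj | rfl | hjm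
    · simpa [hmj.le, Nat.succ_le_of_lt hmj] using h.path m (by omega)
    · simpa [show m + 1 + (k - m - 1) = k by omega] using hne
    · simpa [show ¬m ≤ j by omega, show ¬m < j by omega,
        show m + 1 + (k - j - 1) = m + (k - j - 1) + 1 by omega]
        using h.path (m + (k - j - 1)) (by omega)
  finish := by
    simpa [show ¬L - (k - j - 1) ≤ j by omega, show L - (k - j - 1) + (k - j - 1) = L by omega]
      using h.finish

lemma tail (h : IsMixedChain C (L + 1) u w p) {v : Fin n} (hv : IsSqrtTwoWeight (C v (p 1))) :
    IsMixedChain C L v w (fun m => p (m + 1)) :=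
  ⟨hv, fun m hm => h.path (m + 1) (by omega), h.finish⟩

lemma mutate_path_ne_zero (h : IsMixedChain C L u w p)
    (hmin : ∀ L' < L, ∀ u w p, ¬ IsMixedChain C L' u w p) {j m : ℕ} (hj : j ≤ L) (hm : m < L) :
    mutate C (p j) (p m) (p (m + 1)) ≠ 0 := by
  by_cases hinc : p m = p j ∨ p (m + 1) = p j
  · rw [mutate_of_incident hinc]
    exact neg_ne_zero.mpr (h.path m hm)
  obtain ⟨hmj', hjm'⟩ := not_or.mp hinc
  rw [mutate_of_ne hmj' hjm']
  by_cases hz : mutTerm (C (p m) (p j)) (C (p j) (p (m + 1))) = 0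
  · rw [hz, add_zero]
    exact h.path m hm
  -- otherwise `p j` is joined to `p (m + 1)` or `p m`, and the path can be shortened
  obtain ⟨hmj, hjm⟩ := ne_zero_of_mutTerm_ne_zero hz
  rcases lt_trichotomy j m with hlt | rfl | hgt
  · exact (hmin _ (by omega) _ _ _ (h.shortcut (Nat.lt_succ_of_lt hlt) hm hjm)).elim
  · exact (hmj' rfl).elim
  · have hlt : m + 1 < j := lt_of_le_of_ne hgt (fun he => hjm' (congrArg p he))
    exact (hmin _ (by omega) _ _ _ (h.shortcut (by omega) hj hmj)).elim

lemma mutate_finish (hS : MutationClosedWeights S) (hC : C ∈ S) (h : IsMixedChain C L u w p)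
    (hmin : ∀ L' < L, ∀ u w p, ¬ IsMixedChain C L' u w p) {j : ℕ} (hj : j ≤ L) :
    IsGoldenWeight (mutate C (p j) (p L) w) := by
  by_cases hinc : p L = p j ∨ w = p j
  · rw [mutate_of_incident hinc]
    exact h.finish.neg
  obtain ⟨hLj, hwj⟩ := not_or.mp hinc
  have hjL : j < L := lt_of_le_of_ne hj (by rintro rfl; exact hLj rfl)
  have hsk := hS.skew C hC
  have hgolden : ∀ x, ¬ IsGoldenWeight (C (p j) x) := fun x hx =>
    hmin j hjL u x p ⟨h.start, fun m hm => h.path m (by omega), hx⟩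
  have hmut := hS.isWeight _ (hS.mutate_mem C hC (p j)) (p L) w
  rw [mutate_of_ne hLj hwj] at hmut ⊢
  rcases hS.isWeight C hC (p j) w with hjw | hjw | hjw
  · rcases hS.isWeight C hC (p L) (p j) with hLj' | hLj' | hLj'
    · obtain ⟨a, c, -, hc, hLw⟩ := h.finish
      obtain ⟨r, hr⟩ := hLj'.mutTerm hjw
      rw [hLw, hr, ← biquad_ratCast, biquad_add] at hmut ⊢
      simp only [add_zero] at hmut ⊢
      exact hmut.isGoldenWeight_of_sqrtFive_coeff_ne_zero (by rintro rfl; norm_num at hc)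
    · exact (not_sqrtTwo_golden_adjacent hS hC (by rw [hsk]; exact hLj'.neg) h.finish).elim
    · exact (hgolden _ (by rw [hsk]; exact hLj'.neg)).elim
  · exact (not_sqrtTwo_golden_adjacent hS hC hjw (by rw [hsk]; exact h.finish.neg)).elim
  · exact (hgolden w hjw).elim

lemma isRatWeight_of_succ (hS : MutationClosedWeights S) (hC : C ∈ S)
    (h : IsMixedChain C (L + 1) u w p) (hmin : ∀ L' < L + 1, ∀ u w p, ¬ IsMixedChain C L' u w p) :
    IsRatWeight (C (p 0) (p 1)) ∧ IsRatWeight (C u (p 1)) := by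
  have hsk := hS.skew C hC
  constructor
  · rcases hS.isWeight C hC (p 0) (p 1) with ht | ht | ht
    · exact ht
    · exact (hmin L (by omega) _ _ _ (h.tail ht)).elim
    · exact (not_sqrtTwo_golden_adjacent hS hC h.start ht).elim
  · rcases hS.isWeight C hC u (p 1) with hs | hs | hs
    · exact hs
    · exact (hmin L (by omega) _ _ _ (h.tail hs)).elim
    · exact (not_sqrtTwo_golden_adjacent hS hC (by rw [hsk]; exact h.start.neg) hs).elim

/-- If `u — p 0 — p 1` is oriented (either way), mutating at `p 0` adds `±√2 · C (p 0) (p 1)` to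
the rational weight `C u (p 1)`, which therefore becomes a `√2`-arrow. -/
lemma mutate_zero (hS : MutationClosedWeights S) (hC : C ∈ S) (h : IsMixedChain C (L + 1) u w p)
    (hmin : ∀ L' < L + 1, ∀ u w p, ¬ IsMixedChain C L' u w p)
    (hpos : 0 < C u (p 0) * C (p 0) (p 1)) :
    IsMixedChain (mutate C (p 0)) L u w (fun m => p (m + 1)) := by
  refine ⟨?_, fun m hm => h.mutate_path_ne_zero hmin (Nat.zero_le _) (by omega),
    h.mutate_finish hS hC hmin (Nat.zero_le _)⟩
  have hsk := hS.skew C hC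
  obtain ⟨⟨t, ht⟩, ⟨s, hs⟩⟩ := h.isRatWeight_of_succ hS hC hmin
  have ht0 : t ≠ 0 := by
    rintro rfl
    exact h.path 0 (by omega) (by rw [ht, Rat.cast_zero])
  have hu : u ≠ p 0 := by
    intro he
    exact h.start.ne_zero (by rw [he]; exact hsk.apply_self _)
  have hp : p 1 ≠ p 0 := by
    intro he
    exact h.path 0 (by omega) (by rw [he]; exact hsk.apply_self _)
  have hmut := hS.isWeight _ (hS.mutate_mem C hC (p 0)) u (p 1)
  rw [mutate_of_ne hu hp, mutTerm_of_pos hpos, h.start, hs, ht, ← biquad_ratCast,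
    ← biquad_ratCast, sqrt_two_eq_biquad, biquad_mul, biquad_add] at hmut ⊢
  norm_num at hmut ⊢
  exact (hmut.isSqrtTwoWeight_of_sqrtTwo_coeff_ne_zero ht0).1

/-- If `u → p 0 ← p 1` (or the reverse), mutating at `p 1` reverses `p 0 — p 1` and keeps the
rest of the chain; the `√2`-arrow cannot change, as it would acquire a rational part. -/
lemma mutate_one (hS : MutationClosedWeights S) (hC : C ∈ S) (h : IsMixedChain C (L + 1) u w p)
    (hmin : ∀ L' < L + 1, ∀ u w p, ¬ IsMixedChain C L' u w p)
    (hneg : C u (p 0) * C (p 0) (p 1) < 0) :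
    IsMixedChain (mutate C (p 1)) (L + 1) u w p ∧
      0 < mutate C (p 1) u (p 0) * mutate C (p 1) (p 0) (p 1) := by
  have hsk := hS.skew C hC
  obtain ⟨ht, hs⟩ := h.isRatWeight_of_succ hS hC hmin
  have hback : IsRatWeight (C (p 1) (p 0)) := by rw [hsk]; exact ht.neg
  have hp : p 0 ≠ p 1 := by
    intro he
    exact h.path 0 (by omega) (by rw [he]; exact hsk.apply_self _)
  have hu : u ≠ p 1 := by
    intro he
    exact h.start.not_isRatWeight (by rw [he]; exact hback)
  have hstart : mutate C (p 1) u (p 0) = C u (p 0) := by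
    have hmut := hS.isWeight _ (hS.mutate_mem C hC (p 1)) u (p 0)
    obtain ⟨r, hr⟩ := hs.mutTerm hback
    obtain ⟨e, he, hue⟩ := h.start.eq_biquad
    rw [mutate_of_ne hu hp, hr, hue, ← biquad_ratCast, biquad_add] at hmut ⊢
    norm_num at hmut ⊢
    rw [(hmut.isSqrtTwoWeight_of_sqrtTwo_coeff_ne_zero (by rintro rfl; norm_num at he)).2.1]
  have hflip : mutate C (p 1) (p 0) (p 1) = -C (p 0) (p 1) := mutate_of_incident (Or.inr rfl)
  refine ⟨⟨hstart ▸ h.start, fun m hm => h.mutate_path_ne_zero hmin (by omega) hm,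
    h.mutate_finish hS hC hmin (by omega)⟩, ?_⟩
  rw [hstart, hflip]
  linarith

end IsMixedChain

theorem MutationClosedWeights.not_isMixedChain (hS : MutationClosedWeights S) (L : ℕ) :
    ∀ C ∈ S, ∀ u w p, ¬ IsMixedChain C L u w p := by
  induction L using Nat.strong_induction_on with
  | _ L ih =>
  rintro C hC u w p h
  cases L with
  | zero => exact not_sqrtTwo_golden_adjacent hS hC h.start h.finish
  | succ L =>
  have hmin : ∀ D ∈ S, ∀ L' < L + 1, ∀ u w p, ¬ IsMixedChain D L' u w p :=
    fun D hD L' hL' => ih L' hL' D hD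
  have hmut := hS.mutate_mem
  rcases lt_trichotomy (C u (p 0) * C (p 0) (p 1)) 0 with hneg | hzero | hpos
  · obtain ⟨h', hpos⟩ := h.mutate_one hS hC (hmin C hC) hneg
    exact ih L (by omega) _ (hmut _ (hmut C hC _) _) u w _
      (h'.mutate_zero hS (hmut C hC _) (hmin _ (hmut C hC _)) hpos)
  · exact mul_ne_zero h.start.ne_zero (h.path 0 (by omega)) hzero
  · exact ih L (by omega) _ (hmut C hC _) u w _ (h.mutate_zero hS hC (hmin C hC) hpos)

end MutationClosedWeights

lemma isGoldenWeight_two_mul_cos {p : ℕ} (hp : 0 < p) (hp5 : 2 * p < 5) :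
    IsGoldenWeight (2 * cos (π * p / 5)) := by
  have hcos : cos (π / 5) = (1 + √5) / 4 := cos_pi_div_five
  obtain rfl | rfl : p = 1 ∨ p = 2 := by omega
  · refine ⟨1 / 2, 1 / 2, by norm_num, by norm_num, ?_⟩
    rw [Nat.cast_one, mul_one, hcos]
    simp [biquad]
    ring
  · refine ⟨-1 / 2, 1 / 2, by norm_num, by norm_num, ?_⟩
    rw [Nat.cast_two, show π * 2 / 5 = 2 * (π / 5) by ring, cos_two_mul, hcos]
    simp [biquad]
    linear_combination (1 / 4 : ℝ) * sqrt_five_mul_self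

lemma isWeight_two_mul_cos {p q : ℕ} (hpq : 2 * p < q) (hq : q ≤ 5) :
    IsWeight (2 * cos (π * p / q)) := by
  obtain rfl | hp := Nat.eq_zero_or_pos p
  · exact Or.inl ⟨2, by simp⟩
  interval_cases q <;> try omega
  · obtain rfl : p = 1 := by omega
    exact Or.inl ⟨1, by norm_num [show π * 1 / 3 = π / 3 by ring]⟩
  · obtain rfl : p = 1 := by omega
    refine Or.inr (Or.inl ?_)
    rw [IsSqrtTwoWeight, show π * (1 : ℕ) / (4 : ℕ) = π / 4 by push_cast; ring, cos_pi_div_four,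
      abs_of_nonneg (by positivity)]
    ring
  · exact Or.inr (Or.inr (isGoldenWeight_two_mul_cos hp hpq))

lemma mutationClosedWeights_mutEquiv {B : Matrix (Fin n) (Fin n) ℝ} (hB : IsSkewSymmetric B)
    (hbound : ∀ C, MutEquiv B C → ∀ i j, i ≠ j →
      C i j = 0 ∨ ∃ p q : ℕ, 2 * p < q ∧ q ≤ 5 ∧ |C i j| = 2 * cos (π * p / q)) :
    MutationClosedWeights {C | MutEquiv B C} where
  skew _ hC := hC.isSkewSymmetric hB
  isWeight C hC i j := by
    by_cases hij : i = j
    · subst hij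
      exact Or.inl ⟨0, by rw [(hC.isSkewSymmetric hB).apply_self, Rat.cast_zero]⟩
    rcases hbound C hC i j hij with h0 | ⟨p, q, hpq, hq, habs⟩
    · exact Or.inl ⟨0, by rw [h0, Rat.cast_zero]⟩
    · exact IsWeight.of_abs (habs ▸ isWeight_two_mul_cos hpq hq)
  mutate_mem _ hC k := hC.trans_mutate k

lemma isMixedChain_of_walk {B : Matrix (Fin n) (Fin n) ℝ} (hB : IsSkewSymmetric B)
    {u v v' w : Fin n} (W : (toGraph B).Walk v v') (hu : IsSqrtTwoWeight (B u v))
    (hw : IsGoldenWeight (B v' w)) : IsMixedChain B W.length u w W.getVert where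
  start := by rwa [SimpleGraph.Walk.getVert_zero]
  path m hm := by
    obtain ⟨-, h | h⟩ := W.adj_getVert_succ hm
    · exact h
    · rwa [hB, neg_ne_zero] at h
  finish := by rwa [SimpleGraph.Walk.getVert_length]

theorem denominator5_no_denominator4_general {n : ℕ} (B : Matrix (Fin n) (Fin n) ℝ)
    (hskew : IsSkewSymmetric B) (hconn : Connected B)
    (hhd : HighestDenom B 5) :
    ∀ C, MutEquiv B C → ∀ i j, |C i j| ≠ Real.sqrt 2 := by
  intro C hC i j hCij
  obtain ⟨hbound, C₀, hC₀, i₀, j₀, p, hp, hp5, -, hC₀ij⟩ := hhd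
  have hS := mutationClosedWeights_mutEquiv hskew hbound
  have hB := hS.isWeight B (MutEquiv.refl B)
  obtain ⟨u, v, huv⟩ := exists_isSqrtTwoWeight_of_mutEquiv hB hC hCij
  obtain ⟨v', w, hv'w⟩ := exists_isGoldenWeight_of_mutEquiv hB hC₀
    (IsGoldenWeight.of_abs (hC₀ij ▸ isGoldenWeight_two_mul_cos hp hp5))
  obtain ⟨W⟩ := hconn.preconnected v v'
  exact hS.not_isMixedChain _ B (MutEquiv.refl B) u w _ (isMixedChain_of_walk hskew W huv hv'w)

/-- If the highest denominator of the mutation class of a connected mutation-finite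
quiver is `5`, then no quiver in its mutation class has an arrow of weight `√2`. -/
theorem denominator5_no_denominator4 {n : ℕ} (B : Matrix (Fin n) (Fin n) ℝ)
    (hskew : IsSkewSymmetric B) (hconn : Connected B) (hfin : MutationFinite B)
    (hhd : HighestDenom B 5) :
    ∀ C, MutEquiv B C → ∀ i j, |C i j| ≠ Real.sqrt 2 :=
  denominator5_no_denominator4_general B hskew hconn hhd

end RealQuiver
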